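/- arXiv:2205.15502 — 4 statements merged into one kernel-verified Lean document; each statement's English description precedes it below -/
import Mathlib

section
/- For a directed Eulerian multigraph $D$, the number of spanning arborescences $\tau_u(D)$ rooted at $u$ is independent of the choice of root vertex $u$. -/
open Finset

/-! Directed multigraphs with labelled arcs: arc type `A`, maps `src`, `tgt`. -/
namespace Digraph0

variable {V : Type*} {A : Type*} [Fintype A]

/-- Outdegree of a vertex. -/
noncomputable def outdeg (src : A → V) (v : V) : ℕ := Nat.card {a : A // src a = v}

/-- Indegree of a vertex. -/
noncomputable def indeg (tgt : A → V) (v : V) : ℕ := Nat.card {a : A // tgt a = v}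

/-- The non-isolated vertices. -/
def supp (src tgt : A → V) : Set V := {v | ∃ a : A, src a = v ∨ tgt a = v}

/-- Indegree equals outdegree at every vertex. -/
def Balanced (src tgt : A → V) : Prop := ∀ v : V, outdeg src v = indeg tgt v

/-- Adjacency, ignoring directions. -/
def Adj (src tgt : A → V) (x y : V) : Prop :=
  ∃ a : A, (src a = x ∧ tgt a = y) ∨ (src a = y ∧ tgt a = x)

/-- Connectivity (ignoring directions) on the non-isolated vertices. -/
def Conn (src tgt : A → V) : Prop :=
  ∀ x ∈ supp src tgt, ∀ y ∈ supp src tgt, Relation.ReflTransGen (Adj src tgt) x y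

/-- Eulerian directed multigraph: balanced and connected. -/
def IsEulerian (src tgt : A → V) : Prop := Balanced src tgt ∧ Conn src tgt

/-- One step along an arc of `T`. -/
def Step (src tgt : A → V) (T : Finset A) (x y : V) : Prop :=
  ∃ a ∈ T, src a = x ∧ tgt a = y

/-- `T` is a spanning arborescence oriented toward the root `u`:
no arc leaves `u`, every other non-isolated vertex has exactly one outgoing arc in `T`,
and every non-isolated vertex has a directed path in `T` to `u`. -/
def IsArborescence (src tgt : A → V) (u : V) (T : Finset A) : Prop :=
  (∀ a ∈ T, src a ≠ u) ∧
  (∀ v ∈ supp src tgt, v ≠ u → ∃! a : A, a ∈ T ∧ src a = v) ∧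
  (∀ v ∈ supp src tgt, Relation.ReflTransGen (Step src tgt T) v u)

/-- The number of spanning arborescences with root `u`. -/
noncomputable def tau (src tgt : A → V) (u : V) : ℕ :=
  Nat.card {T : Finset A // IsArborescence src tgt u T}

/-- An Euler tour, as a list of arcs traversing every arc exactly once,
consecutive arcs being consistent, and closing up. -/
def IsEulerTour (src tgt : A → V) (l : List A) : Prop :=
  l.Nodup ∧ (∀ a : A, a ∈ l) ∧ l.Chain' (fun a b => tgt a = src b) ∧
  ∀ h : l ≠ [], tgt (l.getLast h) = src (l.head h)

end Digraph0

/-! At every vertex `u` of the support, `outdeg u · τ u = ∑_{tgt a = u} τ (src a)`: both sides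
count the functional graphs in which every vertex reaches `u`. Adding an arc out of `u` to an
arborescence rooted at `u` closes a unique cycle through `u`, and deleting the arc `a` of that cycle
entering `u` leaves an arborescence rooted at `src a`.

So `τ u` is the average of `τ` over the in-neighbours of `u`, and the vertices where `τ` is
maximal are closed under predecessors. In a balanced digraph a set closed under predecessors is
also closed under successors (the arcs leaving it and the arcs entering it are equinumerous), so
by connectivity it is the whole support. -/

namespace Function

theorem iterate_eq_of_isPeriodicPt_succ {α : Type*} {f : α → α} {x : α} {m n : ℕ}
    (hm : IsPeriodicPt f (m + 1) x) (hn : IsPeriodicPt f (n + 1) x) : f^[m] x = f^[n] x :=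
  calc f^[m] x = f^[m] (f^[(m + 1) * n] x) := by rw [(hm.mul_const n).eq]
    _ = f^[n] (f^[(n + 1) * m] x) := by rw [← iterate_add_apply, ← iterate_add_apply]; ring_nf
    _ = f^[n] x := by rw [(hn.mul_const m).eq]

end Function

namespace Relation

open Function

variable {α : Type*} {R : α → α → Prop}

theorem ReflTransGen.restrict_ne_target {x r : α} (h : ReflTransGen R x r) :
    ReflTransGen (fun y z => R y z ∧ y ≠ r) x r := by
  induction h using ReflTransGen.head_induction_on with
  | refl => exact .refl
  | @head y z hyz _ ih =>
    by_cases hy : y = r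
    · exact hy ▸ .refl
    · exact ih.head ⟨hyz, hy⟩

theorem eq_of_rightUnique_of_cycle (hR : Relator.RightUnique R) {u r₁ r₂ : α}
    (h₁ : ReflTransGen R u r₁) (hr₁ : R r₁ u) (h₂ : ReflTransGen R u r₂)
    (hr₂ : R r₂ u) : r₁ = r₂ := by
  classical
  let f : α → α := fun x => if h : ∃ y, R x y then h.choose else x
  have hf : ∀ {x y}, R x y → f x = y := fun {x y} h => by
    simp only [f, dif_pos (⟨y, h⟩ : ∃ y, R x y)]
    exact hR (Exists.choose_spec (⟨y, h⟩ : ∃ y, R x y)) h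
  have hiter : ∀ {y}, ReflTransGen R u y → ∃ n, f^[n] u = y := by
    intro y h
    induction h with
    | refl => exact ⟨0, rfl⟩
    | tail _ hyz ih =>
      obtain ⟨n, hn⟩ := ih
      exact ⟨n + 1, by rw [iterate_succ_apply', hn, hf hyz]⟩
  obtain ⟨m, rfl⟩ := hiter h₁
  obtain ⟨n, rfl⟩ := hiter h₂
  exact iterate_eq_of_isPeriodicPt_succ
    (by rw [IsPeriodicPt, IsFixedPt, iterate_succ_apply', hf hr₁])
    (by rw [IsPeriodicPt, IsFixedPt, iterate_succ_apply', hf hr₂])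

end Relation

namespace Digraph0

open Relation
open scoped Classical

variable {V : Type*} {A : Type*} {src tgt : A → V}

lemma src_mem_supp (a : A) : src a ∈ supp src tgt := ⟨a, Or.inl rfl⟩

lemma tgt_mem_supp (a : A) : tgt a ∈ supp src tgt := ⟨a, Or.inr rfl⟩

section Harmonic

variable [Fintype A]

lemma supp_finite : (supp src tgt).Finite :=
  ((Set.finite_range src).union (Set.finite_range tgt)).subset fun _ ⟨a, h⟩ =>
    h.elim (fun h => Or.inl ⟨a, h⟩) (fun h => Or.inr ⟨a, h⟩)

lemma outdeg_eq_card (v : V) : outdeg src v = #{a | src a = v} := by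
  rw [outdeg, Nat.card_eq_fintype_card, Fintype.card_subtype]

lemma indeg_eq_card (v : V) : indeg tgt v = #{a | tgt a = v} := by
  rw [indeg, Nat.card_eq_fintype_card, Fintype.card_subtype]

lemma Balanced.sum_comp_src_eq_sum_comp_tgt (hbal : Balanced src tgt) {M : Type*}
    [AddCommMonoid M] (φ : V → M) : ∑ a, φ (src a) = ∑ a, φ (tgt a) := by
  let W : Finset V := univ.image src ∪ univ.image tgt
  rw [← sum_fiberwise_of_maps_to' (g := src) (t := W) (by simp [W]) φ,
    ← sum_fiberwise_of_maps_to' (g := tgt) (t := W) (by simp [W]) φ]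
  refine sum_congr rfl fun v _ => ?_
  rw [sum_const, sum_const, ← outdeg_eq_card, ← indeg_eq_card, hbal v]

lemma Balanced.tgt_mem_of_src_mem (hbal : Balanced src tgt) {S : Set V}
    (hS : ∀ a, tgt a ∈ S → src a ∈ S) {a : A} (ha : src a ∈ S) : tgt a ∈ S := by
  let χ : V → ℕ := fun v => if v ∈ S then 1 else 0
  have hle : ∀ e ∈ univ, χ (tgt e) ≤ χ (src e) := fun e _ => by
    by_cases he : tgt e ∈ S <;> simp [χ, he, hS e]
  have hχ := (sum_eq_sum_iff_of_le hle).1 (hbal.sum_comp_src_eq_sum_comp_tgt χ).symm a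
    (mem_univ a)
  by_contra h
  simp [χ, ha, h] at hχ

lemma IsEulerian.reflTransGen_step (hE : IsEulerian src tgt) {x y : V}
    (hx : x ∈ supp src tgt) (hy : y ∈ supp src tgt) :
    ReflTransGen (Step src tgt univ) x y := by
  have hxy := hE.2 x hx y hy
  clear hx
  induction hxy using ReflTransGen.head_induction_on with
  | refl => exact .refl
  | head hadj _ ih =>
    obtain ⟨a, ⟨rfl, rfl⟩ | ⟨rfl, rfl⟩⟩ := hadj
    · exact ih.head ⟨a, mem_univ a, rfl, rfl⟩
    · exact hE.1.tgt_mem_of_src_mem (S := {v | ReflTransGen (Step src tgt univ) v y})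
        (fun e he => ReflTransGen.head ⟨e, mem_univ e, rfl, rfl⟩ he) ih

def IsHarmonic (src tgt : A → V) (f : V → ℕ) : Prop :=
  ∀ v ∈ supp src tgt, outdeg src v * f v = ∑ a with tgt a = v, f (src a)

lemma IsHarmonic.src_eq_of_tgt_eq_max {f : V → ℕ} (hf : IsHarmonic src tgt f)
    (hbal : Balanced src tgt) {M : ℕ} (hM : ∀ v ∈ supp src tgt, f v ≤ M) {a : A}
    (ha : f (tgt a) = M) : f (src a) = M := by
  have hsum : ∑ e with tgt e = tgt a, f (src e) = ∑ e with tgt e = tgt a, M := by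
    rw [← hf _ (tgt_mem_supp a), ha, sum_const, smul_eq_mul, hbal, indeg_eq_card]
  exact (sum_eq_sum_iff_of_le fun e _ => hM _ (src_mem_supp e)).1 hsum a (by simp)

lemma IsHarmonic.eq_of_isEulerian {f : V → ℕ} (hf : IsHarmonic src tgt f)
    (hE : IsEulerian src tgt) {u w : V} (hu : u ∈ supp src tgt) (hw : w ∈ supp src tgt) :
    f u = f w := by
  obtain ⟨v₀, hv₀, hmax⟩ := Set.exists_max_image _ f supp_finite ⟨u, hu⟩
  have hconst : ∀ x, ReflTransGen (Step src tgt univ) x v₀ → f x = f v₀ := by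
    intro x hx
    induction hx using ReflTransGen.head_induction_on with
    | refl => rfl
    | head hstep _ ih =>
      obtain ⟨a, -, rfl, rfl⟩ := hstep
      exact hf.src_eq_of_tgt_eq_max hE.1 hmax ih
  rw [hconst u (hE.reflTransGen_step hu hv₀), hconst w (hE.reflTransGen_step hw hv₀)]

end Harmonic

def OneOut (src tgt : A → V) (F : Finset A) : Prop :=
  ∀ v ∈ supp src tgt, ∃! a : A, a ∈ F ∧ src a = v

/-- Such an `F` has exactly one cycle, and it passes through `u`. -/
def IsFunctionalToward (src tgt : A → V) (u : V) (F : Finset A) : Prop :=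
  OneOut src tgt F ∧ ∀ v ∈ supp src tgt, ReflTransGen (Step src tgt F) v u

variable {T F : Finset A}

lemma Step.mono (hTF : T ⊆ F) {x y : V} : Step src tgt T x y → Step src tgt F x y :=
  fun ⟨a, ha, hx, hy⟩ => ⟨a, hTF ha, hx, hy⟩

lemma OneOut.rightUnique (hF : OneOut src tgt F) : Relator.RightUnique (Step src tgt F) := by
  rintro _ _ _ ⟨a, ha, rfl, rfl⟩ ⟨b, hb, hab, rfl⟩
  rw [(hF _ (src_mem_supp a)).unique ⟨ha, rfl⟩ ⟨hb, hab⟩]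

lemma IsArborescence.not_mem {r : V} (hT : IsArborescence src tgt r T) {a : A}
    (ha : src a = r) : a ∉ T :=
  fun h => hT.1 a h ha

lemma IsArborescence.oneOut_insert {a : A} (hT : IsArborescence src tgt (src a) T) :
    OneOut src tgt (insert a T) := by
  intro v hv
  by_cases hva : v = src a
  · subst hva
    refine ⟨a, ⟨mem_insert_self a T, rfl⟩, ?_⟩
    rintro e ⟨he, hes⟩
    exact (mem_insert.1 he).resolve_right fun he => hT.1 e he hes
  · obtain ⟨e, ⟨heT, hes⟩, huniq⟩ := hT.2.1 v hv hva
    refine ⟨e, ⟨mem_insert_of_mem heT, hes⟩, ?_⟩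
    rintro e' ⟨he', he's⟩
    exact huniq e' ⟨(mem_insert.1 he').resolve_left fun h => hva (h ▸ he's.symm), he's⟩

lemma IsArborescence.isFunctionalToward_insert_of_src_eq {u : V} {b : A}
    (hT : IsArborescence src tgt u T) (hb : src b = u) :
    IsFunctionalToward src tgt u (insert b T) := by
  subst hb
  exact ⟨hT.oneOut_insert, fun v hv =>
    ReflTransGen.mono (fun _ _ => Step.mono (subset_insert b T)) _ _ (hT.2.2 v hv)⟩

lemma IsArborescence.isFunctionalToward_insert_of_tgt_eq {u : V} {a : A}
    (hT : IsArborescence src tgt (src a) T) (ha : tgt a = u) :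
    IsFunctionalToward src tgt u (insert a T) :=
  ⟨hT.oneOut_insert, fun v hv => ha ▸ ((hT.isFunctionalToward_insert_of_src_eq rfl).2 v hv).tail
    ⟨a, mem_insert_self a T, rfl, rfl⟩⟩

lemma OneOut.isArborescence_erase (hF : OneOut src tgt F) {c : A} (hc : c ∈ F)
    (hreach : ∀ v ∈ supp src tgt, ReflTransGen (Step src tgt F) v (src c)) :
    IsArborescence src tgt (src c) (F.erase c) := by
  refine ⟨fun e he hes => ?_, fun v hv hvc => ?_, fun v hv => ?_⟩
  · exact (mem_erase.1 he).1
      ((hF _ (src_mem_supp c)).unique ⟨(mem_erase.1 he).2, hes⟩ ⟨hc, rfl⟩)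
  · obtain ⟨e, ⟨heF, rfl⟩, huniq⟩ := hF v hv
    exact ⟨e, ⟨mem_erase.2 ⟨fun h => hvc (h ▸ rfl), heF⟩, rfl⟩,
      fun e' he' => huniq e' ⟨(mem_erase.1 he'.1).2, he'.2⟩⟩
  · refine ReflTransGen.mono ?_ _ _ (hreach v hv).restrict_ne_target
    rintro _ _ ⟨⟨e, heF, rfl, rfl⟩, he⟩
    exact ⟨e, mem_erase.2 ⟨fun h => he (h ▸ rfl), heF⟩, rfl, rfl⟩

/-- The arc entering `u` along the cycle through `u`. -/
lemma IsFunctionalToward.existsUnique_cycle_arc {u : V} (hF : IsFunctionalToward src tgt u F)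
    (hu : u ∈ supp src tgt) :
    ∃! c, c ∈ F ∧ tgt c = u ∧ ReflTransGen (Step src tgt F) u (src c) := by
  obtain ⟨b, ⟨hb, rfl⟩, -⟩ := hF.1 u hu
  obtain ⟨r, hur, c, hc, rfl, hcu⟩ := TransGen.tail'_iff.1
    (TransGen.head' ⟨b, hb, rfl, rfl⟩ (hF.2 _ (tgt_mem_supp b)))
  refine ⟨c, ⟨hc, hcu, hur⟩, fun c' ⟨hc', hc'u, hur'⟩ => ?_⟩
  have hsrc := eq_of_rightUnique_of_cycle hF.1.rightUnique hur' ⟨c', hc', rfl, hc'u⟩ hur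
    ⟨c, hc, rfl, hcu⟩
  exact (hF.1 _ (src_mem_supp c)).unique ⟨hc', hsrc⟩ ⟨hc, rfl⟩

lemma card_outArc_arborescence_eq {u : V} (hu : u ∈ supp src tgt) :
    Nat.card {q : A × Finset A // src q.1 = u ∧ IsArborescence src tgt u q.2} =
      Nat.card {F : Finset A // IsFunctionalToward src tgt u F} := by
  refine Nat.card_eq_of_bijective
    (fun q => ⟨insert q.1.1 q.1.2, q.2.2.isFunctionalToward_insert_of_src_eq q.2.1⟩)
    ⟨?_, ?_⟩
  · rintro ⟨⟨b₁, T₁⟩, hb₁, hT₁⟩ ⟨⟨b₂, T₂⟩, hb₂, hT₂⟩ h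
    dsimp only at hb₁ hT₁ hb₂ hT₂
    have hF : insert b₁ T₁ = insert b₂ T₂ := congrArg Subtype.val h
    obtain rfl : b₁ = b₂ := ((hT₁.isFunctionalToward_insert_of_src_eq hb₁).1 _ hu).unique
      ⟨mem_insert_self _ _, hb₁⟩ ⟨hF ▸ mem_insert_self _ _, hb₂⟩
    obtain rfl : T₁ = T₂ := by
      rw [← erase_insert (hT₁.not_mem hb₁), hF, erase_insert (hT₂.not_mem hb₂)]
    rfl
  · rintro ⟨F, hF, hreach⟩
    obtain ⟨b, ⟨hb, rfl⟩, -⟩ := hF _ hu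
    exact ⟨⟨(b, F.erase b), rfl, hF.isArborescence_erase hb hreach⟩,
      Subtype.ext (insert_erase hb)⟩

lemma card_inArc_arborescence_eq {u : V} (hu : u ∈ supp src tgt) :
    Nat.card {q : A × Finset A // tgt q.1 = u ∧ IsArborescence src tgt (src q.1) q.2} =
      Nat.card {F : Finset A // IsFunctionalToward src tgt u F} := by
  refine Nat.card_eq_of_bijective
    (fun q => ⟨insert q.1.1 q.1.2, q.2.2.isFunctionalToward_insert_of_tgt_eq q.2.1⟩)
    ⟨?_, ?_⟩
  · rintro ⟨⟨a₁, T₁⟩, ha₁, hT₁⟩ ⟨⟨a₂, T₂⟩, ha₂, hT₂⟩ h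
    dsimp only at ha₁ hT₁ ha₂ hT₂
    have hF : insert a₁ T₁ = insert a₂ T₂ := congrArg Subtype.val h
    have hcycle : ∀ {a T}, IsArborescence src tgt (src a) T → tgt a = u →
        a ∈ insert a T ∧ tgt a = u ∧ ReflTransGen (Step src tgt (insert a T)) u (src a) :=
      fun hT ha =>
        ⟨mem_insert_self _ _, ha, (hT.isFunctionalToward_insert_of_src_eq rfl).2 u hu⟩
    obtain rfl : a₁ = a₂ :=
      ((hT₁.isFunctionalToward_insert_of_tgt_eq ha₁).existsUnique_cycle_arc hu).unique
        (hcycle hT₁ ha₁) (hF ▸ hcycle hT₂ ha₂)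
    obtain rfl : T₁ = T₂ := by
      rw [← erase_insert (hT₁.not_mem rfl), hF, erase_insert (hT₂.not_mem rfl)]
    rfl
  · rintro ⟨F, hF⟩
    obtain ⟨c, ⟨hc, hcu, huc⟩, -⟩ := hF.existsUnique_cycle_arc hu
    exact ⟨⟨(c, F.erase c), hcu,
        hF.1.isArborescence_erase hc fun v hv => (hF.2 v hv).trans huc⟩,
      Subtype.ext (insert_erase hc)⟩

lemma card_outArc_arborescence (u : V) :
    Nat.card {q : A × Finset A // src q.1 = u ∧ IsArborescence src tgt u q.2} =
      outdeg src u * tau src tgt u := by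
  rw [Nat.card_congr (Equiv.subtypeProdEquivProd (p := fun a : A => src a = u)
    (q := fun T : Finset A => IsArborescence src tgt u T)), Nat.card_prod]
  rfl

variable [Fintype A]

lemma card_inArc_arborescence (u : V) :
    Nat.card {q : A × Finset A // tgt q.1 = u ∧ IsArborescence src tgt (src q.1) q.2} =
      ∑ a with tgt a = u, tau src tgt (src a) := by
  rw [Nat.card_congr (Equiv.subtypeProdEquivSigmaSubtype
    (fun (a : A) (T : Finset A) => tgt a = u ∧ IsArborescence src tgt (src a) T)),
    Nat.card_sigma, sum_filter]
  refine sum_congr rfl fun a _ => ?_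
  split_ifs with h
  · simp only [h, true_and, tau]
  · simp [h]

theorem isHarmonic_tau : IsHarmonic src tgt (tau src tgt) := fun u hu => by
  rw [← card_outArc_arborescence, ← card_inArc_arborescence, card_outArc_arborescence_eq hu,
    card_inArc_arborescence_eq hu]

end Digraph0

/-- For a directed Eulerian multigraph, the number of spanning arborescences rooted at `u`
is independent of the choice of the root vertex `u`. -/
theorem tau_root_independent {V : Type*} {A : Type*} [Fintype A]
    (src tgt : A → V) (hE : Digraph0.IsEulerian src tgt) :
    ∀ u ∈ Digraph0.supp src tgt, ∀ w ∈ Digraph0.supp src tgt,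
      Digraph0.tau src tgt u = Digraph0.tau src tgt w := by
  intro u hu w hw
  exact Digraph0.isHarmonic_tau.eq_of_isEulerian hE hu hw
end

section
/- Let $\mathcal{H}$ be an $m$-uniform multi-hypergraph in which every vertex has degree divisible by $m$ (a Veblen hypergraph), and let $e$ be an edge of $\mathcal{H}$ containing a vertex $v$ that lies in no other edge (a cored vertex). If $\mathcal{H}$ admits an Euler rooting, then the multiplicity of $e$ in $\mathcal{H}$ is $km$ for some positive integer $k$, and every cored vertex of $e$ occurs as the root of $e$ exactly $k$ times in the rooting. -/
open Finset

/-! Multi-hypergraphs with labelled edge occurrences `E`, edge map `mem`, and rootings. -/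
namespace MultiHyp

variable {V : Type*} [DecidableEq V] {E : Type*} [Fintype E]

/-- Arcs of the digraph `R` associated with a rooting `r`: for each edge occurrence,
the `m-1` arcs from its root to the other vertices of the edge. -/
def ArcT (mem : E → Finset V) (r : E → V) : Type _ :=
  {p : E × V // p.2 ∈ mem p.1 ∧ p.2 ≠ r p.1}

instance (mem : E → Finset V) (r : E → V) [DecidableEq E] [Fintype V] :
    Fintype (ArcT mem r) := by
  unfold ArcT; infer_instance

/-- Source of an arc: the root of its edge occurrence. -/
def asrc (mem : E → Finset V) (r : E → V) (a : ArcT mem r) : V := r a.1.1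

/-- Target of an arc. -/
def atgt (mem : E → Finset V) (r : E → V) (a : ArcT mem r) : V := a.1.2

/-- A rooting chooses a root vertex inside each edge occurrence. -/
def IsRooting (mem : E → Finset V) (r : E → V) : Prop := ∀ e : E, r e ∈ mem e

/-- An Euler rooting: the associated digraph `R` is Eulerian. -/
def IsEulerRooting [Fintype V] [DecidableEq E] (mem : E → Finset V) (r : E → V) : Prop :=
  IsRooting mem r ∧ Digraph0.IsEulerian (asrc mem r) (atgt mem r)

/-- Degree of a vertex: number of edge occurrences containing it. -/
noncomputable def degree (mem : E → Finset V) (v : V) : ℕ := Nat.card {e : E // v ∈ mem e}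

/-- `m`-uniformity. -/
def MUniform (mem : E → Finset V) (m : ℕ) : Prop := ∀ e : E, (mem e).card = m

/-- Veblen hypergraph: every vertex degree is divisible by `m`. -/
def Veblen (mem : E → Finset V) (m : ℕ) : Prop := ∀ v : V, m ∣ degree mem v

end MultiHyp

/-! Balance of `R` at a vertex `w` compares the `m - 1` arcs leaving `w` from each edge rooted
at `w` with the single arc entering `w` from each other edge through `w`; hence
`m · #(edges rooted at w) = deg w`. A cored vertex of `e₀` lies only in copies of `e₀`, so its
degree is the multiplicity of `e₀`, a multiple `k m` by the Veblen condition, and it is the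
root of exactly `k` of them. -/

namespace MultiHyp

variable {V : Type*} {E : Type*} {mem : E → Finset V} {r : E → V}

theorem degree_eq_card_of_cored {e₀ : E} {w : V} (hw : w ∈ mem e₀)
    (hcored : ∀ e, w ∈ mem e → mem e = mem e₀) :
    degree mem w = Nat.card {e // mem e = mem e₀} :=
  Nat.card_congr (Equiv.subtypeEquivRight fun e => ⟨hcored e, fun h => h ▸ hw⟩)

theorem card_rootedAt_of_cored {e₀ : E} {w : V} (hroot : IsRooting mem r)
    (hcored : ∀ e, w ∈ mem e → mem e = mem e₀) :
    Nat.card {e // mem e = mem e₀ ∧ r e = w} = Nat.card {e // r e = w} :=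
  Nat.card_congr <| Equiv.subtypeEquivRight fun e =>
    ⟨And.right, fun h => ⟨hcored e (h ▸ hroot e), h⟩⟩

variable [Fintype V] [DecidableEq V] [Fintype E]

theorem card_arcT_subtype (P : E → V → Prop) [∀ e, DecidablePred (P e)] :
    Nat.card {a : ArcT mem r // P a.1.1 a.1.2} = ∑ e, #{u ∈ (mem e).erase (r e) | P e u} := by
  refine (Nat.card_congr <|
    (Equiv.subtypeSubtypeEquivSubtypeInter _ fun p : E × V => P p.1 p.2).trans
      (Equiv.subtypeProdEquivSigmaSubtype fun e u => (u ∈ mem e ∧ u ≠ r e) ∧ P e u)).trans ?_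
  rw [Nat.card_sigma]
  refine Finset.sum_congr rfl fun e _ => ?_
  rw [Nat.card_eq_fintype_card, Fintype.card_subtype]
  congr 1
  ext u
  simp only [Finset.mem_filter, Finset.mem_univ, true_and, Finset.mem_erase, and_comm]

theorem outdeg_asrc (w : V) :
    Digraph0.outdeg (asrc mem r) w = ∑ e, if r e = w then #((mem e).erase (r e)) else 0 := by
  refine (card_arcT_subtype fun e _ => r e = w).trans ?_
  simp only [Finset.filter_const, apply_ite Finset.card, Finset.card_empty]

theorem indeg_atgt (w : V) :
    Digraph0.indeg (atgt mem r) w = ∑ e, if w ∈ (mem e).erase (r e) then 1 else 0 := by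
  refine (card_arcT_subtype fun _ u => u = w).trans ?_
  simp only [Finset.filter_eq', apply_ite Finset.card, Finset.card_singleton, Finset.card_empty]

theorem mul_card_rootedAt_eq_degree {m : ℕ} (hroot : IsRooting mem r) (hunif : MUniform mem m)
    (hbal : Digraph0.Balanced (asrc mem r) (atgt mem r)) (w : V) :
    m * Nat.card {e // r e = w} = degree mem w := by
  have hbalw : (∑ e, if r e = w then #((mem e).erase (r e)) else 0) =
      ∑ e, if w ∈ (mem e).erase (r e) then 1 else 0 := by
    rw [← outdeg_asrc, ← indeg_atgt]
    exact hbal w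
  have hout (e : E) : (if r e = w then m else 0) =
      (if r e = w then #((mem e).erase (r e)) else 0) + if r e = w then 1 else 0 := by
    split_ifs
    · rw [Finset.card_erase_add_one (hroot e), hunif e]
    · rfl
  have hin (e : E) : (if w ∈ mem e then 1 else 0) =
      (if w ∈ (mem e).erase (r e) then 1 else 0) + if r e = w then 1 else 0 := by
    have := hroot e
    by_cases h : r e = w <;> simp_all [Finset.mem_erase, eq_comm]
  simp only [degree, Nat.card_eq_fintype_card, Fintype.card_subtype, Finset.card_filter,
    Finset.mul_sum, mul_ite, mul_one, mul_zero]
  rw [Finset.sum_congr rfl fun e _ => hout e, Finset.sum_congr rfl fun e _ => hin e,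
    Finset.sum_add_distrib, Finset.sum_add_distrib, hbalw]

end MultiHyp

theorem cored_vertex_multiplicity_general {V : Type*} [Fintype V] [DecidableEq V]
    {E : Type*} [Fintype E] [DecidableEq E] (m : ℕ)
    (mem : E → Finset V) (hunif : MultiHyp.MUniform mem m) (hveb : MultiHyp.Veblen mem m)
    (e₀ : E) (v : V) (hv : v ∈ mem e₀) (hcored : ∀ e : E, v ∈ mem e → mem e = mem e₀)
    (r : E → V) (hr : MultiHyp.IsEulerRooting mem r) :
    ∃ k : ℕ, 0 < k ∧ Nat.card {e : E // mem e = mem e₀} = k * m ∧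
      ∀ w ∈ mem e₀, (∀ e : E, w ∈ mem e → mem e = mem e₀) →
        Nat.card {e : E // mem e = mem e₀ ∧ r e = w} = k := by
  obtain ⟨hroot, hbal, -⟩ := hr
  obtain ⟨k, hk⟩ := hveb v
  rw [MultiHyp.degree_eq_card_of_cored hv hcored] at hk
  have hm : 0 < m := hunif e₀ ▸ Finset.card_pos.mpr ⟨v, hv⟩
  have hN : 0 < Nat.card {e // mem e = mem e₀} := Finite.card_pos_iff.mpr ⟨⟨e₀, rfl⟩⟩
  refine ⟨k, Nat.pos_of_mul_pos_left (hk ▸ hN), by rw [hk, mul_comm], fun w hw hwc => ?_⟩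
  rw [MultiHyp.card_rootedAt_of_cored hroot hwc]
  apply Nat.eq_of_mul_eq_mul_left hm
  rw [MultiHyp.mul_card_rootedAt_eq_degree hroot hunif hbal,
    MultiHyp.degree_eq_card_of_cored hw hwc, hk]

/-- Let `H` be an `m`-uniform Veblen multi-hypergraph and `e₀` an edge occurrence containing a
cored vertex `v` (a vertex lying only in copies of `e₀`). If `H` admits an Euler rooting `r`,
then the multiplicity of the edge of `e₀` is `k * m` for some `k > 0`, and every cored vertex
of this edge is its root exactly `k` times. -/
theorem cored_vertex_multiplicity {V : Type*} [Fintype V] [DecidableEq V]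
    {E : Type*} [Fintype E] [DecidableEq E] (m : ℕ) (hm : 2 ≤ m)
    (mem : E → Finset V) (hunif : MultiHyp.MUniform mem m) (hveb : MultiHyp.Veblen mem m)
    (e₀ : E) (v : V) (hv : v ∈ mem e₀) (hcored : ∀ e : E, v ∈ mem e → mem e = mem e₀)
    (r : E → V) (hr : MultiHyp.IsEulerRooting mem r) :
    ∃ k : ℕ, 0 < k ∧ Nat.card {e : E // mem e = mem e₀} = k * m ∧
      ∀ w ∈ mem e₀, (∀ e : E, w ∈ mem e → mem e = mem e₀) →
        Nat.card {e : E // mem e = mem e₀ ∧ r e = w} = k :=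
  cored_vertex_multiplicity_general m mem hunif hveb e₀ v hv hcored r hr
end

section
/- Let $\mathcal{H}$ be an $m$-uniform Veblen multi-hypergraph whose underlying simple hypergraph is a hypertree (connected and acyclic). Then $\mathcal{H}$ admits at most one Euler rooting up to the ordering, and in it, all vertices of each edge occur as roots of that edge equally often; consequently every edge of $\mathcal{H}$ has multiplicity divisible by $m$. -/
open Finset

/-! Hypergraphs as finite sets of edges; connectivity, cycles, hypertrees. -/
namespace HypG

variable {V : Type*} [DecidableEq V]

/-- Connectivity of a hypergraph on a vertex set `W`. -/
def HConn (K : Finset (Finset V)) (W : Finset V) : Prop :=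
  ∀ x ∈ W, ∀ y ∈ W, Relation.ReflTransGen (fun a b => ∃ e ∈ K, a ∈ e ∧ b ∈ e) x y

/-- `m`-uniformity of a hypergraph. -/
def Uniform (K : Finset (Finset V)) (m : ℕ) : Prop := ∀ e ∈ K, e.card = m

/-- The vertex set of a hypergraph (union of its edges). -/
def vset (K : Finset (Finset V)) : Finset V := K.biUnion id

/-- A cycle: an alternating sequence `v₀ e₁ v₁ ⋯ e_l v_l = v₀` with `l ≥ 2`,
with pairwise distinct vertices and pairwise distinct edges, `v_i, v_{i+1} ∈ e_{i+1}`. -/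
def HasCycle (K : Finset (Finset V)) : Prop :=
  ∃ l : ℕ, ∃ f : Fin (l + 2) → V, ∃ g : Fin (l + 2) → Finset V,
    Function.Injective f ∧ Function.Injective g ∧ (∀ i, g i ∈ K) ∧
    ∀ i : Fin (l + 2), f i ∈ g i ∧ f (i + 1) ∈ g i

/-- A hypertree: a connected acyclic hypergraph (every vertex covered by an edge). -/
def IsHypertree (K : Finset (Finset V)) (m : ℕ) : Prop :=
  Uniform K m ∧ HConn K (vset K) ∧ ¬ HasCycle K

end HypG

/-! Fix an edge `S`, a vertex `x ∈ S`, and let `P` be the set of vertices reachable from `x`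
without using `S`. Acyclicity gives `P ∩ S = {x}`, and every other edge lies inside or outside `P`.
So in the digraph of an Euler rooting the arcs leaving `P` are the `m - 1` arcs of each copy of `S`
rooted at `x`, and the arcs entering `P` are the arcs to `x`, one from each copy of `S` rooted
elsewhere. Balancedness equates the two counts: `m` times the number of copies of `S` rooted at `x`
is the multiplicity of `S`, whatever `x` and the rooting. -/
theorem Nat.card_subtype_eq_card_and_add_card_and_not {α : Type*} [Finite α] (P Q : α → Prop) :
    Nat.card {a // P a} = Nat.card {a // P a ∧ Q a} + Nat.card {a // P a ∧ ¬ Q a} := by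
  classical
  rw [← Nat.card_congr (Equiv.subtypeSubtypeEquivSubtypeInter P Q),
    ← Nat.card_congr (Equiv.subtypeSubtypeEquivSubtypeInter P (¬ Q ·)), ← Nat.card_sum,
    Nat.card_congr (Equiv.sumCompl _)]

theorem Nat.card_subtype_and_prod {α β : Type*} (p : α → Prop) (q : β → Prop) :
    Nat.card {c : α × β // p c.1 ∧ q c.2} = Nat.card {a // p a} * Nat.card {b // q b} :=
  (Nat.card_congr Equiv.subtypeProdEquivProd).trans (Nat.card_prod _ _)

namespace Digraph0

variable {V A : Type*} [Fintype A] {src tgt : A → V}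

theorem Balanced.card_src_mem_eq_card_tgt_mem (hb : Balanced src tgt) (P : V → Prop) :
    Nat.card {a // P (src a)} = Nat.card {a // P (tgt a)} := by
  have fiber : ∀ v, Nonempty ({a // src a = v} ≃ {a // tgt a = v}) := fun v =>
    Finite.card_eq.mp (hb v)
  exact Nat.card_congr <|
    (Equiv.sigmaSubtypeFiberEquivSubtype src fun _ => Iff.rfl).symm.trans <|
      (Equiv.sigmaCongrRight fun v : Subtype P => (fiber v).some).trans <|
        Equiv.sigmaSubtypeFiberEquivSubtype tgt fun _ => Iff.rfl

theorem Balanced.card_leaving_eq_card_entering (hb : Balanced src tgt) (P : V → Prop) :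
    Nat.card {a // P (src a) ∧ ¬ P (tgt a)} = Nat.card {a // P (tgt a) ∧ ¬ P (src a)} := by
  have hsrc := Nat.card_subtype_eq_card_and_add_card_and_not (fun a => P (src a)) (P ∘ tgt)
  have htgt := Nat.card_subtype_eq_card_and_add_card_and_not (fun a => P (tgt a)) (P ∘ src)
  have hboth : Nat.card {a // P (src a) ∧ P (tgt a)} = Nat.card {a // P (tgt a) ∧ P (src a)} :=
    Nat.card_congr (Equiv.subtypeEquivRight fun _ => and_comm)
  have := hb.card_src_mem_eq_card_tgt_mem P
  simp only [Function.comp_apply] at hsrc htgt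
  omega

end Digraph0

namespace HypG

variable {V : Type*}

def incidenceGraph (K : Finset (Finset V)) : SimpleGraph (V ⊕ Finset V) where
  Adj
    | .inl v, .inr e => e ∈ K ∧ v ∈ e
    | .inr e, .inl v => e ∈ K ∧ v ∈ e
    | _, _ => False
  symm := ⟨by rintro (v | e) (w | f) h <;> exact h⟩
  loopless := ⟨by rintro (v | e) h <;> exact h⟩

variable {K : Finset (Finset V)}

@[simp] theorem incidenceGraph_adj_inl_inr {v : V} {e : Finset V} :
    (incidenceGraph K).Adj (.inl v) (.inr e) ↔ e ∈ K ∧ v ∈ e := Iff.rfl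

@[simp] theorem incidenceGraph_adj_inr_inl {v : V} {e : Finset V} :
    (incidenceGraph K).Adj (.inr e) (.inl v) ↔ e ∈ K ∧ v ∈ e := Iff.rfl

theorem incidenceGraph_adj_isLeft {a b : V ⊕ Finset V} (h : (incidenceGraph K).Adj a b) :
    b.isLeft = !a.isLeft := by
  rcases a with a | a <;> rcases b with b | b <;> first | rfl | exact h.elim

theorem getVert_isLeft_incidenceGraph {x : V} {b : V ⊕ Finset V}
    (p : (incidenceGraph K).Walk (.inl x) b) {n : ℕ} (hn : n ≤ p.length) :
    (p.getVert n).isLeft = decide (Even n) := by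
  induction n with
  | zero => simp
  | succ n ih =>
    rw [incidenceGraph_adj_isLeft (p.adj_getVert_succ hn), ih (by omega)]
    simp [Nat.even_add_one, -Nat.not_even_iff_odd]

def IsBergePath (K : Finset (Finset V)) (k : ℕ) (f : ℕ → V) (g : ℕ → Finset V) : Prop :=
  Set.InjOn f (Set.Iic k) ∧ Set.InjOn g (Set.Iio k) ∧
    ∀ i < k, g i ∈ K ∧ f i ∈ g i ∧ f (i + 1) ∈ g i

theorem exists_isBergePath_of_isPath {x y : V} {p : (incidenceGraph K).Walk (.inl x) (.inl y)}
    (hp : p.IsPath) : ∃ k f g, IsBergePath K k f g ∧ f 0 = x ∧ f k = y := by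
  obtain ⟨k, hk⟩ : Even p.length := by
    simpa using getVert_isLeft_incidenceGraph p le_rfl
  have hvert : ∀ i, ∃ a, i ≤ k → p.getVert (2 * i) = .inl a := fun i =>
    if hi : i ≤ k then
      (Sum.isLeft_iff.mp (by simp [getVert_isLeft_incidenceGraph p (n := 2 * i) (by omega)])).imp
        fun _ h _ => h
    else ⟨x, fun h => absurd h hi⟩
  have hedge : ∀ i, ∃ e, i < k → p.getVert (2 * i + 1) = .inr e := fun i =>
    if hi : i < k then
      (Sum.isRight_iff.mp (by
        simp [← Sum.bnot_isLeft, getVert_isLeft_incidenceGraph p (n := 2 * i + 1) (by omega)])).imp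
        fun _ h _ => h
    else ⟨∅, fun h => absurd h hi⟩
  choose f hf using hvert
  choose g hg using hedge
  refine ⟨k, f, g, ⟨?_, ?_, ?_⟩, ?_, ?_⟩
  · intro i hi j hj hij
    have := hp.getVert_injOn (x₁ := 2 * i) (x₂ := 2 * j) (by simp at hi ⊢; omega)
      (by simp at hj ⊢; omega) (by rw [hf i hi, hf j hj, hij])
    omega
  · intro i hi j hj hij
    have := hp.getVert_injOn (x₁ := 2 * i + 1) (x₂ := 2 * j + 1) (by simp at hi ⊢; omega)
      (by simp at hj ⊢; omega) (by rw [hg i hi, hg j hj, hij])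
    omega
  · intro i hi
    have hout := p.adj_getVert_succ (i := 2 * i) (by omega)
    have hin := p.adj_getVert_succ (i := 2 * i + 1) (by omega)
    rw [hf i (by omega), hg i hi] at hout
    rw [hg i hi, show 2 * i + 1 + 1 = 2 * (i + 1) by ring, hf (i + 1) (by omega)] at hin
    exact ⟨hout.1, hout.2, hin.2⟩
  · simpa using (hf 0 (Nat.zero_le k)).symm
  · have := hf k le_rfl
    rw [show 2 * k = p.length by omega, SimpleGraph.Walk.getVert_length] at this
    exact (Sum.inl_injective this).symm

theorem hasCycle_of_isBergePath_erase [DecidableEq V] {S : Finset V} (hS : S ∈ K) {k : ℕ}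
    {f : ℕ → V} {g : ℕ → Finset V} (hp : IsBergePath (K.erase S) k f g) (h0 : f 0 ∈ S)
    (hk : f k ∈ S) (hne : f 0 ≠ f k) : HasCycle K := by
  obtain ⟨l, rfl⟩ : ∃ l, k = l + 1 :=
    Nat.exists_eq_add_one.mpr (Nat.pos_of_ne_zero (by rintro rfl; exact hne rfl))
  obtain ⟨hf, hg, hedge⟩ := hp
  have hgS : ∀ i < l + 1, g i ≠ S := fun i hi => (Finset.mem_erase.mp (hedge i hi).1).1
  refine ⟨l, fun i => f i, fun i => if (i : ℕ) < l + 1 then g i else S, ?_, ?_, ?_, ?_⟩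
  · intro i j hij
    exact Fin.ext (hf (Set.mem_Iic.mpr (Fin.is_le i)) (Set.mem_Iic.mpr (Fin.is_le j)) hij)
  · intro i j hij
    apply Fin.ext
    dsimp only at hij
    split_ifs at hij with hi hj hj
    · exact hg hi hj hij
    · exact absurd hij (hgS _ hi)
    · exact absurd hij.symm (hgS _ hj)
    · omega
  · intro i
    dsimp only
    split_ifs with hi
    · exact Finset.mem_of_mem_erase (hedge i hi).1
    · exact hS
  · intro i
    by_cases hi : (i : ℕ) < l + 1
    · have hlast : i ≠ Fin.last (l + 1) := fun h => by simp [h] at hi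
      simpa [Fin.val_add_one, hi, hlast] using (hedge i hi).2
    · obtain rfl : i = Fin.last (l + 1) := Fin.ext (by simp; omega)
      simpa using ⟨hk, h0⟩

theorem hasCycle_of_reachable_erase [DecidableEq V] {S : Finset V} (hS : S ∈ K) {x y : V}
    (hx : x ∈ S) (hy : y ∈ S) (hxy : x ≠ y)
    (h : (incidenceGraph (K.erase S)).Reachable (.inl x) (.inl y)) : HasCycle K := by
  obtain ⟨p, hp⟩ := h.exists_isPath
  obtain ⟨k, f, g, hpath, rfl, rfl⟩ := exists_isBergePath_of_isPath hp
  exact hasCycle_of_isBergePath_erase hS hpath hx hy hxy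

end HypG

namespace MultiHyp

variable {V E : Type*} [DecidableEq V] [Fintype V] [Fintype E] [DecidableEq E]
  {mem : E → Finset V} {r : E → V}

theorem card_mul_card_root_eq_card_of_separating (hr : IsRooting mem r)
    (hb : Digraph0.Balanced (asrc mem r) (atgt mem r)) {S : Finset V} {x : V} (hx : x ∈ S)
    (P : V → Prop) (hP : ∀ e, mem e ≠ S → ∀ v ∈ mem e, ∀ w ∈ mem e, P v → P w)
    (hPS : ∀ y ∈ S, P y ↔ y = x) :
    S.card * Nat.card {e // mem e = S ∧ r e = x} = Nat.card {e // mem e = S} := by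
  have hPx : P x := (hPS x hx).2 rfl
  have leaving : ∀ p : E × V, ((p.2 ∈ mem p.1 ∧ p.2 ≠ r p.1) ∧ P (r p.1) ∧ ¬ P p.2) ↔
      (mem p.1 = S ∧ r p.1 = x) ∧ p.2 ∈ S.erase x := by
    rintro ⟨e, v⟩
    dsimp only
    constructor
    · rintro ⟨⟨hv, hve⟩, hPr, hPv⟩
      have heS : mem e = S := by_contra fun h => hPv (hP e h _ (hr e) v hv hPr)
      subst heS
      have hrx := (hPS _ (hr e)).1 hPr
      exact ⟨⟨rfl, hrx⟩, Finset.mem_erase.mpr ⟨hrx ▸ hve, hv⟩⟩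
    · rintro ⟨⟨rfl, rfl⟩, hv⟩
      obtain ⟨hvx, hv⟩ := Finset.mem_erase.mp hv
      exact ⟨⟨hv, hvx⟩, hPx, fun h => hvx ((hPS v hv).1 h)⟩
  have entering : ∀ p : E × V, ((p.2 ∈ mem p.1 ∧ p.2 ≠ r p.1) ∧ P p.2 ∧ ¬ P (r p.1)) ↔
      (mem p.1 = S ∧ r p.1 ≠ x) ∧ p.2 ∈ ({x} : Finset V) := by
    rintro ⟨e, v⟩
    dsimp only
    constructor
    · rintro ⟨⟨hv, hve⟩, hPv, hPr⟩
      have heS : mem e = S := by_contra fun h => hPr (hP e h v hv _ (hr e) hPv)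
      subst heS
      exact ⟨⟨rfl, fun h => hPr (h ▸ hPx)⟩, Finset.mem_singleton.mpr ((hPS v hv).1 hPv)⟩
    · rintro ⟨⟨rfl, hrx⟩, hv⟩
      obtain rfl := Finset.mem_singleton.mp hv
      exact ⟨⟨hx, Ne.symm hrx⟩, hPx, fun h => hrx ((hPS _ (hr e)).1 h)⟩
  have hleaving : Nat.card {a // P (asrc mem r a) ∧ ¬ P (atgt mem r a)} =
      Nat.card {e // mem e = S ∧ r e = x} * (S.card - 1) :=
    calc _ = Nat.card {p : E × V // (mem p.1 = S ∧ r p.1 = x) ∧ p.2 ∈ S.erase x} :=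
          Nat.card_congr ((Equiv.subtypeSubtypeEquivSubtypeInter _ _).trans
            (Equiv.subtypeEquivRight leaving))
      _ = Nat.card {e // mem e = S ∧ r e = x} * Nat.card (S.erase x) :=
          Nat.card_subtype_and_prod (fun e => mem e = S ∧ r e = x) (· ∈ S.erase x)
      _ = _ := by rw [Nat.card_eq_finsetCard, Finset.card_erase_of_mem hx]
  have hentering : Nat.card {a // P (atgt mem r a) ∧ ¬ P (asrc mem r a)} =
      Nat.card {e // mem e = S ∧ r e ≠ x} :=
    calc _ = Nat.card {p : E × V // (mem p.1 = S ∧ r p.1 ≠ x) ∧ p.2 ∈ ({x} : Finset V)} :=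
          Nat.card_congr ((Equiv.subtypeSubtypeEquivSubtypeInter _ _).trans
            (Equiv.subtypeEquivRight entering))
      _ = Nat.card {e // mem e = S ∧ r e ≠ x} * Nat.card ({x} : Finset V) :=
          Nat.card_subtype_and_prod (fun e => mem e = S ∧ r e ≠ x) (· ∈ ({x} : Finset V))
      _ = _ := by rw [Nat.card_eq_finsetCard, Finset.card_singleton, mul_one]
  have hcut := hb.card_leaving_eq_card_entering P
  rw [hleaving, hentering] at hcut
  rw [Nat.card_subtype_eq_card_and_add_card_and_not (mem · = S) (r · = x), ← hcut]
  obtain ⟨n, hn⟩ := Nat.exists_eq_add_one.mpr (Finset.card_pos.mpr ⟨x, hx⟩)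
  rw [hn, Nat.add_sub_cancel]
  ring

theorem card_mul_card_root_eq_card (hcyc : ¬ HypG.HasCycle (image mem univ))
    (hr : IsRooting mem r) (hb : Digraph0.Balanced (asrc mem r) (atgt mem r)) (e₀ : E) {x : V}
    (hx : x ∈ mem e₀) :
    (mem e₀).card * Nat.card {e // mem e = mem e₀ ∧ r e = x} = Nat.card {e // mem e = mem e₀} := by
  set G := HypG.incidenceGraph ((image mem univ).erase (mem e₀))
  have hS : mem e₀ ∈ image mem univ := mem_image_of_mem mem (mem_univ e₀)
  refine card_mul_card_root_eq_card_of_separating hr hb hx (fun v => G.Reachable (.inl x) (.inl v))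
    (fun e he v hv w hw hxv => ?_) (fun y hy => ⟨fun hxy => ?_, ?_⟩)
  · have hmem : mem e ∈ (image mem univ).erase (mem e₀) :=
      mem_erase.mpr ⟨he, mem_image_of_mem mem (mem_univ e)⟩
    exact hxv.trans ((show G.Adj (.inl v) (.inr (mem e)) from ⟨hmem, hv⟩).reachable.trans
      (show G.Adj (.inr (mem e)) (.inl w) from ⟨hmem, hw⟩).reachable)
  · by_contra hne
    exact hcyc (HypG.hasCycle_of_reachable_erase hS hx hy (Ne.symm hne) hxy)
  · rintro rfl
    rfl

end MultiHyp

theorem euler_rooting_of_hypertree_unique_general {V : Type*} [Fintype V] [DecidableEq V]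
    {E : Type*} [Fintype E] [DecidableEq E] (m : ℕ) (hm : 2 ≤ m)
    (mem : E → Finset V) (hunif : MultiHyp.MUniform mem m)
    (htree : HypG.IsHypertree (Finset.image mem Finset.univ) m) :
    (∀ r₁ r₂ : E → V, MultiHyp.IsEulerRooting mem r₁ → MultiHyp.IsEulerRooting mem r₂ →
        ∀ (S : Finset V) (x : V),
          Nat.card {e : E // mem e = S ∧ r₁ e = x} =
            Nat.card {e : E // mem e = S ∧ r₂ e = x}) ∧
    (∀ r : E → V, MultiHyp.IsEulerRooting mem r → ∀ e₀ : E, ∀ x ∈ mem e₀, ∀ y ∈ mem e₀,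
        Nat.card {e : E // mem e = mem e₀ ∧ r e = x} =
          Nat.card {e : E // mem e = mem e₀ ∧ r e = y}) ∧
    ((∃ r : E → V, MultiHyp.IsEulerRooting mem r) →
        ∀ e₀ : E, m ∣ Nat.card {e : E // mem e = mem e₀}) := by
  have key : ∀ r, MultiHyp.IsEulerRooting mem r → ∀ e₀, ∀ x ∈ mem e₀,
      m * Nat.card {e // mem e = mem e₀ ∧ r e = x} = Nat.card {e // mem e = mem e₀} :=
    fun r hr e₀ x hx => hunif e₀ ▸
      MultiHyp.card_mul_card_root_eq_card htree.2.2 hr.1 hr.2.1 e₀ hx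
  have hm0 : 0 < m := by omega
  refine ⟨fun r₁ r₂ h₁ h₂ S x => ?_, fun r hr e₀ x hx y hy => ?_, fun ⟨r, hr⟩ e₀ => ?_⟩
  · by_cases hS : ∃ e₀, mem e₀ = S ∧ x ∈ S
    · obtain ⟨e₀, rfl, hx⟩ := hS
      exact Nat.eq_of_mul_eq_mul_left hm0 ((key r₁ h₁ e₀ x hx).trans (key r₂ h₂ e₀ x hx).symm)
    · have hempty : ∀ r, MultiHyp.IsRooting mem r → IsEmpty {e // mem e = S ∧ r e = x} :=
        fun r hr => ⟨fun ⟨e, he, hre⟩ => hS ⟨e, he, he ▸ hre ▸ hr e⟩⟩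
      rw [@Nat.card_of_isEmpty _ (hempty r₁ h₁.1), @Nat.card_of_isEmpty _ (hempty r₂ h₂.1)]
  · exact Nat.eq_of_mul_eq_mul_left hm0 ((key r hr e₀ x hx).trans (key r hr e₀ y hy).symm)
  · obtain ⟨x, hx⟩ : (mem e₀).Nonempty := card_pos.mp (hunif e₀ ▸ hm0)
    exact Dvd.intro _ (key r hr e₀ x hx)

/-- Let `H` be an `m`-uniform Veblen multi-hypergraph whose underlying simple hypergraph is a
hypertree. Then `H` has at most one Euler rooting up to ordering (the multiset of rooted edge
occurrences is uniquely determined), in any Euler rooting all vertices of each edge occur as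
roots of that edge equally often, and (if an Euler rooting exists) every edge has
multiplicity divisible by `m`. -/
theorem euler_rooting_of_hypertree_unique {V : Type*} [Fintype V] [DecidableEq V]
    {E : Type*} [Fintype E] [DecidableEq E] (m : ℕ) (hm : 2 ≤ m)
    (mem : E → Finset V) (hunif : MultiHyp.MUniform mem m) (hveb : MultiHyp.Veblen mem m)
    (htree : HypG.IsHypertree (Finset.image mem Finset.univ) m) :
    (∀ r₁ r₂ : E → V, MultiHyp.IsEulerRooting mem r₁ → MultiHyp.IsEulerRooting mem r₂ →
        ∀ (S : Finset V) (x : V),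
          Nat.card {e : E // mem e = S ∧ r₁ e = x} =
            Nat.card {e : E // mem e = S ∧ r₂ e = x}) ∧
    (∀ r : E → V, MultiHyp.IsEulerRooting mem r → ∀ e₀ : E, ∀ x ∈ mem e₀, ∀ y ∈ mem e₀,
        Nat.card {e : E // mem e = mem e₀ ∧ r e = x} =
          Nat.card {e : E // mem e = mem e₀ ∧ r e = y}) ∧
    ((∃ r : E → V, MultiHyp.IsEulerRooting mem r) →
        ∀ e₀ : E, m ∣ Nat.card {e : E // mem e = mem e₀}) :=
  euler_rooting_of_hypertree_unique_general m hm mem hunif htree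
end

section
/- For positive integers $m_i, m_i'$ with $m_i\ne m_i'$ and $m_{i-1}\ne m_{i-1}'$, the quantity $f_i=\dfrac{\binom{m_{i-1}+m_i-1}{m_{i-1}-1}\binom{m_{i-1}'+m_i'-1}{m_{i-1}'-1}-\binom{m_{i-1}'+m_i-1}{m_{i-1}'-1}\binom{m_{i-1}+m_i'-1}{m_{i-1}-1}}{(m_{i-1}'-m_{i-1})(m_i'-m_i)}$ is strictly positive. -/
/-!
Writing `a = x + 1`, the kernel is `C(x + b, x) = (x + b)! / (x! b!)`. The factors `x!` and `b!`
cancel in every 2 × 2 minor, so strict total positivity reduces to that of `(x, b) ↦ (x + b)!`,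
i.e. to strict log-convexity of the factorial: `(n + d)! / n!` is the rising factorial
`(n + 1) ⋯ (n + d)`, which strictly increases with `n`. The divided difference does not change
when `a, a'` or `b, b'` are swapped, so we may assume `a < a'` and `b < b'`.
-/

namespace Nat

theorem ascFactorial_lt_ascFactorial {n m k : ℕ} (hn : 0 < n) (hnm : n < m) (hk : 0 < k) :
    n.ascFactorial k < m.ascFactorial k := by
  obtain ⟨k, rfl⟩ := exists_add_one_eq.mpr hk
  obtain ⟨m, rfl⟩ := exists_add_one_eq.mpr (hn.trans hnm)
  rw [ascFactorial_succ, ascFactorial_succ]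
  exact Nat.mul_lt_mul_of_lt_of_le (by omega) (ascFactorial_le k hnm.le) (ascFactorial_pos m k)

theorem factorial_add_mul_factorial_lt {p r d : ℕ} (hpr : p < r) (hd : 0 < d) :
    (p + d)! * r ! < p ! * (r + d)! := by
  rw [← factorial_mul_ascFactorial p d, ← factorial_mul_ascFactorial r d]
  have hasc := ascFactorial_lt_ascFactorial (succ_pos p) (succ_lt_succ hpr) hd
  calc p ! * (p + 1).ascFactorial d * r !
      = (p ! * r !) * (p + 1).ascFactorial d := by ring
    _ < (p ! * r !) * (r + 1).ascFactorial d := by gcongr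
    _ = p ! * (r ! * (r + 1).ascFactorial d) := by ring

theorem add_choose_mul_add_choose_lt {x y b b' : ℕ} (hxy : x < y) (hbb : b < b') :
    (y + b).choose y * (x + b').choose x < (x + b).choose x * (y + b').choose y := by
  have hfact : (x + b')! * (y + b)! < (x + b)! * (y + b')! := by
    have h := factorial_add_mul_factorial_lt (p := x + b) (r := y + b) (d := b' - b)
      (by omega) (by omega)
    rwa [show x + b + (b' - b) = x + b' by omega, show y + b + (b' - b) = y + b' by omega] at h
  have hchoose (u v : ℕ) : (u + v).choose u * u ! * v ! = (u + v)! := by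
    simpa using choose_mul_factorial_mul_factorial (n := u + v) (k := u) (by omega)
  refine Nat.lt_of_mul_lt_mul_right (a := x ! * y ! * b ! * b' !) ?_
  calc (y + b).choose y * (x + b').choose x * (x ! * y ! * b ! * b' !)
      = ((y + b).choose y * y ! * b !) * ((x + b').choose x * x ! * b' !) := by ring
    _ = (x + b')! * (y + b)! := by rw [hchoose, hchoose, mul_comm]
    _ < (x + b)! * (y + b')! := hfact
    _ = ((x + b).choose x * x ! * b !) * ((y + b').choose y * y ! * b' !) := by
        rw [hchoose, hchoose]
    _ = (x + b).choose x * (y + b').choose y * (x ! * y ! * b ! * b' !) := by ring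

end Nat

theorem choose_pred_mul_choose_pred_lt {a a' b b' : ℕ} (ha : 0 < a) (haa : a < a')
    (hbb : b < b') :
    (a' + b - 1).choose (a' - 1) * (a + b' - 1).choose (a - 1) <
      (a + b - 1).choose (a - 1) * (a' + b' - 1).choose (a' - 1) := by
  obtain ⟨x, rfl⟩ := Nat.exists_add_one_eq.mpr ha
  obtain ⟨y, rfl⟩ := Nat.exists_add_one_eq.mpr (ha.trans haa)
  simp only [Nat.add_sub_cancel, Nat.add_right_comm _ 1, Nat.add_sub_cancel]
  exact Nat.add_choose_mul_add_choose_lt (by omega) hbb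

theorem choose_tp2_divided_difference_pos_general (a a' b b' : ℕ)
    (ha : 0 < a) (ha' : 0 < a')
    (hna : a ≠ a') (hnb : b ≠ b') :
    0 < ((((a + b - 1).choose (a - 1) * (a' + b' - 1).choose (a' - 1) : ℕ) : ℚ) -
          (((a' + b - 1).choose (a' - 1) * (a + b' - 1).choose (a - 1) : ℕ) : ℚ)) /
        (((a' : ℚ) - (a : ℚ)) * ((b' : ℚ) - (b : ℚ))) := by
  wlog haa : a < a' generalizing a a'
  · convert this a' a ha' ha hna.symm (by omega) using 1
    rw [← neg_div_neg_eq]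
    congr 1 <;> ring
  wlog hbb : b < b' generalizing b b'
  · convert this b' b hnb.symm (by omega) using 1
    rw [← neg_div_neg_eq]
    congr 1 <;> push_cast <;> ring
  have hminor := choose_pred_mul_choose_pred_lt ha haa hbb
  apply div_pos
  · exact sub_pos.mpr (by exact_mod_cast hminor)
  · exact mul_pos (sub_pos.mpr (by exact_mod_cast haa)) (sub_pos.mpr (by exact_mod_cast hbb))

/-- Strict total positivity of order 2 of `(a,b) ↦ C(a+b-1, a-1)`: for positive integers
`a ≠ a'`, `b ≠ b'`, the divided difference
`(C(a+b-1,a-1)·C(a'+b'-1,a'-1) − C(a'+b-1,a'-1)·C(a+b'-1,a-1)) / ((a'-a)(b'-b))`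
is strictly positive. -/
theorem choose_tp2_divided_difference_pos (a a' b b' : ℕ)
    (ha : 0 < a) (ha' : 0 < a') (hb : 0 < b) (hb' : 0 < b')
    (hna : a ≠ a') (hnb : b ≠ b') :
    0 < ((((a + b - 1).choose (a - 1) * (a' + b' - 1).choose (a' - 1) : ℕ) : ℚ) -
          (((a' + b - 1).choose (a' - 1) * (a + b' - 1).choose (a - 1) : ℕ) : ℚ)) /
        (((a' : ℚ) - (a : ℚ)) * ((b' : ℚ) - (b : ℚ))) :=
  choose_tp2_divided_difference_pos_general a a' b b' ha ha' hna hnb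
end
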